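/- Let Ω ⊆ ℝ² be open, and let ψ₁, ψ₂, ψ₃ : Ω → 𝕃 be differentiable paracomplex-valued functions with ψ₃² = ψ₁² + ψ₂² on Ω. Let C^c_{ab} be real numbers with C^c_{ab} = −C^c_{ba}, let ε₁ = ε₂ = 1, ε₃ = −1, and L^c_{ab} = C^c_{ab} − C^a_{bc} ε_a ε_c − C^b_{ac} ε_b ε_c. If ∂ψ_c/∂z̄ + (1/2) Σ_{a,b=1}^{3} L^c_{ab} conj(ψ_a) ψ_b = 0 holds on Ω for c = 1 and c = 2, then ψ₃ · (∂ψ₃/∂z̄ + (1/2) Σ_{a,b=1}^{3} L^3_{ab} conj(ψ_a) ψ_b) = 0 on Ω; in particular, the c = 3 equation holds at every point where ψ₃ is invertible in 𝕃. -/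

import Mathlib

/-- Paracomplex multiplication on 𝕃 = ℝ × ℝ. -/
def Lmul (z w : ℝ × ℝ) : ℝ × ℝ := (z.1 * w.1 + z.2 * w.2, z.1 * w.2 + z.2 * w.1)

/-- Paracomplex conjugation: a + τb ↦ a − τb. -/
def Lconj (z : ℝ × ℝ) : ℝ × ℝ := (z.1, -z.2)

/-- The paracomplex operator ∂/∂z̄: for ψ = (a, b), ∂ψ/∂z̄ = (1/2)(a_u − b_v, b_u − a_v). -/
noncomputable def dzbarL (ψ : ℝ × ℝ → ℝ × ℝ) (p : ℝ × ℝ) : ℝ × ℝ :=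
  ((1 / 2) * ((fderiv ℝ ψ p (1, 0)).1 - (fderiv ℝ ψ p (0, 1)).2),
   (1 / 2) * ((fderiv ℝ ψ p (1, 0)).2 - (fderiv ℝ ψ p (0, 1)).1))

/-!
With `ε = (1, 1, -1)` the constraint reads `∑ ε_c ψ_c² = 0`. Since `∂/∂z̄ = (∂_u - τ ∂_v)/2` is a
derivation of the commutative algebra `𝕃`, this gives `∑ ε_c ψ_c ∂ψ_c/∂z̄ = 0`. Independently,
`∑_c ε_c ψ_c ∑_{a,b} L^c_{ab} conj(ψ_a) ψ_b` vanishes identically: after expanding `L` (and using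
`ε_c² = 1`), the `C^a_{bc}` part dies by antisymmetry of `C` in `b, c`, and the `C^b_{ac}` part
cancels the `C^c_{ab}` part once `b` and `c` are swapped. Hence
`∑_c ε_c ψ_c (∂ψ_c/∂z̄ + ½ ∑ L^c_{ab} conj(ψ_a) ψ_b) = 0`; the first two summands vanish by
hypothesis, and what is left is `-ψ₃ (∂ψ₃/∂z̄ + ½ ∑ L^3_{ab} conj(ψ_a) ψ_b) = 0`.
-/

open Finset Filter Topology

theorem Lmul_comm (z w : ℝ × ℝ) : Lmul z w = Lmul w z := by
  ext <;> simp only [Lmul] <;> ring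

theorem Lmul_assoc (z w v : ℝ × ℝ) : Lmul (Lmul z w) v = Lmul z (Lmul w v) := by
  ext <;> simp only [Lmul] <;> ring

theorem one_Lmul (z : ℝ × ℝ) : Lmul (1, 0) z = z := by
  ext <;> simp [Lmul]

theorem Lmul_zero (z : ℝ × ℝ) : Lmul z 0 = 0 := by
  ext <;> simp [Lmul]

theorem Lmul_add (z w v : ℝ × ℝ) : Lmul z (w + v) = Lmul z w + Lmul z v := by
  ext <;> simp only [Lmul, Prod.fst_add, Prod.snd_add] <;> ring

theorem Lmul_smul (r : ℝ) (z w : ℝ × ℝ) : Lmul z (r • w) = r • Lmul z w := by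
  ext <;> simp only [Lmul, Prod.smul_fst, Prod.smul_snd, smul_eq_mul] <;> ring

theorem eq_zero_of_Lmul_eq_zero {z w x : ℝ × ℝ} (hw : Lmul z w = (1, 0)) (hx : Lmul z x = 0) :
    x = 0 :=
  calc x = Lmul (Lmul z w) x := by rw [hw, one_Lmul]
    _ = Lmul w (Lmul z x) := by rw [Lmul_comm z w, Lmul_assoc]
    _ = 0 := by rw [hx, Lmul_zero]

-- In the null basis `(1 ± τ)/2` paracomplex multiplication is componentwise.
def nullCoords : ℝ × ℝ →ₗ[ℝ] ℝ × ℝ :=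
  (LinearMap.fst ℝ ℝ ℝ + LinearMap.snd ℝ ℝ ℝ).prod (LinearMap.fst ℝ ℝ ℝ - LinearMap.snd ℝ ℝ ℝ)

theorem nullCoords_apply (z : ℝ × ℝ) : nullCoords z = (z.1 + z.2, z.1 - z.2) := rfl

theorem nullCoords_injective : Function.Injective nullCoords := by
  intro z w h
  simp only [nullCoords_apply, Prod.mk.injEq] at h
  ext <;> linarith [h.1, h.2]

theorem nullCoords_Lmul (z w : ℝ × ℝ) : nullCoords (Lmul z w) = nullCoords z * nullCoords w := by
  ext <;> simp only [nullCoords_apply, Lmul, Prod.fst_mul, Prod.snd_mul] <;> ring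

theorem Finset.sum_sum_eq_zero_of_antisymm {ι M : Type*} [Fintype ι] [AddCommGroup M]
    [IsAddTorsionFree M] (f : ι → ι → M) (hf : ∀ i j, f i j = -f j i) :
    ∑ i, ∑ j, f i j = 0 :=
  self_eq_neg.mp <| calc
    ∑ i, ∑ j, f i j = ∑ j, ∑ i, f i j := sum_comm
    _ = ∑ j, ∑ i, -f j i := by simp only [← hf]
    _ = -∑ j, ∑ i, f j i := by simp only [sum_neg_distrib]

theorem sum_smul_mul_connection_eq_zero {ι 𝕜 R : Type*} [Fintype ι] [CommRing 𝕜] [CommRing R]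
    [Algebra 𝕜 R] [IsAddTorsionFree R] (C L : ι → ι → ι → 𝕜) (ε : ι → 𝕜)
    (hC : ∀ c a b, C c a b = -C c b a) (hε : ∀ c, ε c * ε c = 1)
    (hL : ∀ c a b, L c a b = C c a b - C a b c * ε a * ε c - C b a c * ε b * ε c) (x y : ι → R) :
    ∑ c, ε c • (x c * ∑ a, ∑ b, L c a b • (y a * x b)) = 0 := by
  simp only [mul_sum, smul_sum]
  rw [sum_comm]
  refine sum_eq_zero fun a _ => ?_
  have h_skew : ∑ c, ∑ b, (ε a * C a b c) • (y a * (x c * x b)) = 0 :=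
    sum_sum_eq_zero_of_antisymm _ fun c b => by rw [hC a b c, mul_neg, neg_smul, mul_comm (x c)]
  have h_swap : ∑ c, ∑ b, (ε b * C b a c) • (y a * (x c * x b)) =
      ∑ c, ∑ b, (ε c * C c a b) • (y a * (x c * x b)) := by
    rw [sum_comm]; simp only [mul_comm (x _) (x _)]
  calc ∑ c, ∑ b, ε c • (x c * L c a b • (y a * x b))
      = ∑ c, ∑ b, ((ε c * C c a b) • (y a * (x c * x b)) - (ε a * C a b c) • (y a * (x c * x b))
          - (ε b * C b a c) • (y a * (x c * x b))) := by
        refine sum_congr rfl fun c _ => sum_congr rfl fun b _ => ?_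
        rw [mul_smul_comm, smul_smul, ← sub_smul, ← sub_smul, hL,
          show x c * (y a * x b) = y a * (x c * x b) by ring]
        congr 1
        linear_combination (-(C a b c * ε a) - C b a c * ε b) * hε c
    _ = 0 := by simp only [sum_sub_distrib, h_skew, h_swap]; abel

theorem sum_smul_Lmul_connection_eq_zero {ι : Type*} [Fintype ι] (C L : ι → ι → ι → ℝ)
    (ε : ι → ℝ) (hC : ∀ c a b, C c a b = -C c b a) (hε : ∀ c, ε c * ε c = 1)
    (hL : ∀ c a b, L c a b = C c a b - C a b c * ε a * ε c - C b a c * ε b * ε c)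
    (x y : ι → ℝ × ℝ) :
    ∑ c, ε c • Lmul (x c) (∑ a, ∑ b, L c a b • Lmul (y a) (x b)) = 0 := by
  apply nullCoords_injective
  simpa only [map_sum, map_smul, nullCoords_Lmul, map_zero] using
    sum_smul_mul_connection_eq_zero C L ε hC hε hL (fun c => nullCoords (x c))
    (fun c => nullCoords (y c))

section Derivatives

variable {E : Type*} [NormedAddCommGroup E] [NormedSpace ℝ E] {f g : E → ℝ × ℝ} {x : E}

theorem DifferentiableAt.Lmul (hf : DifferentiableAt ℝ f x) (hg : DifferentiableAt ℝ g x) :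
    DifferentiableAt ℝ (fun y => _root_.Lmul (f y) (g y)) x := by
  unfold _root_.Lmul; fun_prop

theorem fderiv_Lmul_apply (hf : DifferentiableAt ℝ f x) (hg : DifferentiableAt ℝ g x) (v : E) :
    fderiv ℝ (fun y => Lmul (f y) (g y)) x v =
      Lmul (fderiv ℝ f x v) (g x) + Lmul (f x) (fderiv ℝ g x v) := by
  have hf₁ := hf.hasFDerivAt.fst
  have hf₂ := hf.hasFDerivAt.snd
  have hg₁ := hg.hasFDerivAt.fst
  have hg₂ := hg.hasFDerivAt.snd
  have h : HasFDerivAt (fun y => Lmul (f y) (g y)) _ x :=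
    ((hf₁.mul hg₁).add (hf₂.mul hg₂)).prodMk ((hf₁.mul hg₂).add (hf₂.mul hg₁))
  rw [h.fderiv]
  ext <;> simp only [ContinuousLinearMap.prod_apply, add_apply, smul_apply, smul_eq_mul,
    ContinuousLinearMap.comp_apply, ContinuousLinearMap.coe_fst', ContinuousLinearMap.coe_snd',
    Lmul, Prod.mk_add_mk] <;> ring

end Derivatives

section DzbarL

variable {f g : ℝ × ℝ → ℝ × ℝ} {p : ℝ × ℝ}

theorem dzbarL_congr (h : f =ᶠ[𝓝 p] g) : dzbarL f p = dzbarL g p := by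
  simp only [dzbarL, h.fderiv_eq]

theorem dzbarL_const (z : ℝ × ℝ) : dzbarL (fun _ => z) p = 0 := by
  simp [dzbarL]

theorem dzbarL_const_smul (hf : DifferentiableAt ℝ f p) (r : ℝ) :
    dzbarL (fun q => r • f q) p = r • dzbarL f p := by
  ext <;> simp only [dzbarL, fderiv_fun_const_smul hf, smul_apply,
    Prod.smul_fst, Prod.smul_snd, Prod.smul_mk, smul_eq_mul] <;> ring

theorem dzbarL_sum {ι : Type*} (s : Finset ι) {f : ι → ℝ × ℝ → ℝ × ℝ}
    (hf : ∀ i ∈ s, DifferentiableAt ℝ (f i) p) :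
    dzbarL (fun q => ∑ i ∈ s, f i q) p = ∑ i ∈ s, dzbarL (f i) p := by
  ext <;> simp [dzbarL, fderiv_fun_sum hf, Prod.fst_sum, Prod.snd_sum, ← sum_sub_distrib, mul_sum]

theorem dzbarL_Lmul (hf : DifferentiableAt ℝ f p) (hg : DifferentiableAt ℝ g p) :
    dzbarL (fun q => Lmul (f q) (g q)) p = Lmul (dzbarL f p) (g p) + Lmul (f p) (dzbarL g p) := by
  simp only [dzbarL, fderiv_Lmul_apply hf hg]
  ext <;> simp only [Lmul, Prod.fst_add, Prod.snd_add] <;> ring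

end DzbarL

theorem sum_smul_Lmul_dzbarL_eq_zero {ι : Type*} [Fintype ι] (ε : ι → ℝ)
    {ψ : ι → ℝ × ℝ → ℝ × ℝ} {p : ℝ × ℝ} (hψ : ∀ c, DifferentiableAt ℝ (ψ c) p)
    (hsq : ∀ᶠ q in 𝓝 p, ∑ c, ε c • Lmul (ψ c q) (ψ c q) = 0) :
    ∑ c, ε c • Lmul (ψ c p) (dzbarL (ψ c) p) = 0 := by
  have hd := dzbarL_congr (g := fun _ => 0) hsq
  rw [dzbarL_const, dzbarL_sum (f := fun c q => ε c • Lmul (ψ c q) (ψ c q)) _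
    fun c _ => ((hψ c).Lmul (hψ c)).const_smul (ε c)] at hd
  simp only [dzbarL_const_smul ((hψ _).Lmul (hψ _)), dzbarL_Lmul (hψ _) (hψ _),
    Lmul_comm (dzbarL _ p), ← two_nsmul, smul_comm (ε _) 2, ← smul_sum] at hd
  exact nsmul_right_injective two_ne_zero (hd.trans (smul_zero 2).symm)

theorem sum_smul_Lmul_dzbarL_add_connection_eq_zero {ι : Type*} [Fintype ι]
    (C L : ι → ι → ι → ℝ) (ε : ι → ℝ) (hC : ∀ c a b, C c a b = -C c b a)
    (hε : ∀ c, ε c * ε c = 1)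
    (hL : ∀ c a b, L c a b = C c a b - C a b c * ε a * ε c - C b a c * ε b * ε c)
    {ψ : ι → ℝ × ℝ → ℝ × ℝ} {p : ℝ × ℝ} (hψ : ∀ c, DifferentiableAt ℝ (ψ c) p)
    (hsq : ∀ᶠ q in 𝓝 p, ∑ c, ε c • Lmul (ψ c q) (ψ c q) = 0) :
    ∑ c, ε c • Lmul (ψ c p) (dzbarL (ψ c) p +
      (1 / 2 : ℝ) • ∑ a, ∑ b, L c a b • Lmul (Lconj (ψ a p)) (ψ b p)) = 0 := by
  have hderiv := sum_smul_Lmul_dzbarL_eq_zero ε hψ hsq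
  have hconn := sum_smul_Lmul_connection_eq_zero C L ε hC hε hL (ψ · p) (Lconj <| ψ · p)
  simp only [Lmul_add, Lmul_smul, smul_add, sum_add_distrib, smul_comm (ε _) (1 / 2 : ℝ),
    ← smul_sum, hderiv, hconn, smul_zero, add_zero]

/-- Lemma (paracomplex case): if ψ₃² = ψ₁² + ψ₂² and ψ₁, ψ₂ satisfy the first two
equations ∂ψ_c/∂z̄ + (1/2) Σ L^c_{ab} conj(ψ_a) ψ_b = 0 on Ω, then
ψ₃ · (∂ψ₃/∂z̄ + (1/2) Σ L^3_{ab} conj(ψ_a) ψ_b) = 0 on Ω; in particular the third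
equation holds wherever ψ₃ is invertible in 𝕃.  (Indices shifted to {0,1,2}.) -/
theorem lemma_third_equation_paracomplex
    (Ω : Set (ℝ × ℝ)) (hΩ : IsOpen Ω)
    (ψ : Fin 3 → (ℝ × ℝ → ℝ × ℝ))
    (hdiff : ∀ a, DifferentiableOn ℝ (ψ a) Ω)
    (hsq : ∀ p ∈ Ω, Lmul (ψ 2 p) (ψ 2 p) = Lmul (ψ 0 p) (ψ 0 p) + Lmul (ψ 1 p) (ψ 1 p))
    (C : Fin 3 → Fin 3 → Fin 3 → ℝ)
    (hC : ∀ c a b, C c a b = -C c b a)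
    (ε : Fin 3 → ℝ) (hε : ε = ![1, 1, -1])
    (L : Fin 3 → Fin 3 → Fin 3 → ℝ)
    (hL : ∀ c a b, L c a b = C c a b - C a b c * ε a * ε c - C b a c * ε b * ε c)
    (heq : ∀ c : Fin 3, c = 0 ∨ c = 1 → ∀ p ∈ Ω,
      dzbarL (ψ c) p + (1 / 2 : ℝ) • ∑ a : Fin 3, ∑ b : Fin 3,
        L c a b • Lmul (Lconj (ψ a p)) (ψ b p) = 0) :
    ∀ p ∈ Ω,
      Lmul (ψ 2 p) (dzbarL (ψ 2) p + (1 / 2 : ℝ) • ∑ a : Fin 3, ∑ b : Fin 3,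
        L 2 a b • Lmul (Lconj (ψ a p)) (ψ b p)) = 0 ∧
      ((∃ w : ℝ × ℝ, Lmul (ψ 2 p) w = (1, 0)) →
        dzbarL (ψ 2) p + (1 / 2 : ℝ) • ∑ a : Fin 3, ∑ b : Fin 3,
          L 2 a b • Lmul (Lconj (ψ a p)) (ψ b p) = 0) := by
  intro p hp
  have hε_sq : ∀ c, ε c * ε c = 1 := by
    subst hε; intro c; fin_cases c <;> norm_num
  have hsq_near : ∀ᶠ q in 𝓝 p, ∑ c, ε c • Lmul (ψ c q) (ψ c q) = 0 :=
    eventually_of_mem (hΩ.mem_nhds hp) fun q hq => by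
      simp only [Fin.sum_univ_three, hε, Matrix.cons_val_zero, Matrix.cons_val_one,
        Matrix.cons_val, one_smul, neg_smul, hsq q hq]
      abel
  have hsum := sum_smul_Lmul_dzbarL_add_connection_eq_zero C L ε hC hε_sq hL
    (fun c => (hdiff c).differentiableAt (hΩ.mem_nhds hp)) hsq_near
  rw [Fin.sum_univ_three, heq 0 (.inl rfl) p hp, heq 1 (.inr rfl) p hp, Lmul_zero, Lmul_zero,
    smul_zero, smul_zero, zero_add, zero_add, hε] at hsum
  simp only [Matrix.cons_val_two, Matrix.tail_cons, Matrix.head_cons, neg_smul, one_smul,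
    neg_eq_zero] at hsum
  exact ⟨hsum, fun ⟨w, hw⟩ => eq_zero_of_Lmul_eq_zero hw hsum⟩
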